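/- arXiv:2007.02926 — 3 statements merged into one kernel-verified Lean document; each statement's English description precedes it below -/
import Mathlib

section
/- A nonzero element a of a UFD A lies in D (i.e., τ^k(a) is an associate of a for some k ≠ 0) if and only if every prime factor of a lies in D. -/
section Aux
variable {A : Type*} [CommRing A]

lemma assoc_map (σ : A ≃+* A) {x y : A} (h : Associated x y) :
    Associated (σ x) (σ y) := by
  obtain ⟨u, hu⟩ := h
  exact ⟨Units.map (σ : A →* A) u, by simp [← map_mul, hu]⟩

lemma ringaut_mul_apply (σ ρ : A ≃+* A) (x : A) : (σ * ρ) x = σ (ρ x) := rfl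

lemma assoc_pow_nat (σ : A ≃+* A) {x : A} (h : Associated (σ x) x) :
    ∀ n : ℕ, Associated ((σ ^ n) x) x := by
  intro n
  induction n with
  | zero => simpa using Associated.refl x
  | succ m ih =>
    have : (σ ^ (m + 1)) x = (σ ^ m) (σ x) := by
      rw [pow_succ, ringaut_mul_apply]
    rw [this]
    exact ((assoc_map (σ ^ m) h).trans ih)

lemma prime_map (σ : A ≃+* A) {p : A} (hp : Prime p) : Prime (σ p) :=
  (MulEquiv.prime_iff σ.toMulEquiv).mpr hp

-- powers in ℤ: if τ^k x ~ x then τ^(|k| * m) x ~ x for all m : ℕ, stated via natAbs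
lemma assoc_zpow_natAbs (τ : A ≃+* A) {x : A} {k : ℤ} (h : Associated ((τ ^ k) x) x) :
    Associated ((τ ^ (k.natAbs : ℤ)) x) x := by
  rcases Int.natAbs_eq k with hk | hk
  · rwa [← hk]
  · -- k = -natAbs; apply τ^(natAbs k) to both sides
    have h2 := assoc_map (τ ^ (k.natAbs : ℤ)) h
    have : (τ ^ (k.natAbs : ℤ)) ((τ ^ k) x) = x := by
      have h0 : (k.natAbs : ℤ) + k = 0 := by omega
      rw [← ringaut_mul_apply, ← zpow_add, h0]
      rfl
    rw [this] at h2
    exact h2.symm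
end Aux


lemma mem_Dset_aux {A : Type*} [CommRing A] (τ : A ≃+* A) (q : A) (k : ℤ) (hk : k ≠ 0)
    (i j : ℕ) (hij : i < j)
    (h : Associated (((τ ^ k) ^ i) q) (((τ ^ k) ^ j) q)) :
    ∃ m : ℤ, m ≠ 0 ∧ Associated ((τ ^ m) q) q := by
  refine ⟨k * ((j : ℤ) - i), ?_, ?_⟩
  · have : (j : ℤ) - i ≠ 0 := by omega
    exact mul_ne_zero hk this
  · have hpow : ∀ n : ℕ, ((τ ^ k) ^ n) = τ ^ (k * n) := by
      intro n
      rw [← zpow_natCast (τ ^ k) n, ← zpow_mul]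
    rw [hpow i, hpow j] at h
    have h2 := assoc_map (τ ^ (-(k * (i : ℤ)))) h
    have e : ∀ m : ℤ, (τ ^ (-(k * (i : ℤ)))) ((τ ^ m) q) = (τ ^ (m - k * i)) q := by
      intro m
      rw [← ringaut_mul_apply, ← zpow_add]
      ring_nf
    rw [e, e] at h2
    simp only [sub_self] at h2
    have : (k * (j : ℤ) - k * i) = k * ((j : ℤ) - i) := by ring
    rw [this] at h2
    have hq0 : (τ ^ (0 : ℤ)) q = q := rfl
    rw [hq0] at h2
    exact h2.symm

-- The set `D` of nonzero elements `a` with `τ^k(a)` an associate of `a` for some `k ≠ 0`.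
def Dset {A : Type*} [CommRing A] (τ : A ≃+* A) : Set A :=
  {a : A | a ≠ 0 ∧ ∃ k : ℤ, k ≠ 0 ∧ Associated ((τ ^ k) a) a}

/-- A nonzero element `a` of a UFD `A` lies in `D` if and only if
every prime factor of `a` lies in `D`. -/
theorem mem_Dset_iff_prime_factors {A : Type*} [CommRing A] [IsDomain A]
    [UniqueFactorizationMonoid A]
    (τ : A ≃+* A) (a : A) (ha : a ≠ 0) :
    a ∈ Dset τ ↔ ∀ q : A, Prime q → q ∣ a → q ∈ Dset τ := by
  constructor
  · rintro ⟨-, k, hk, hak⟩ q hq hqa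
    classical
    refine ⟨hq.ne_zero, ?_⟩
    -- every (τ^k)^n q divides a (up to associates)
    have hdvd : ∀ n : ℕ, ((τ ^ k) ^ n) q ∣ a := by
      intro n
      have h1 : ((τ ^ k) ^ n) q ∣ ((τ ^ k) ^ n) a := map_dvd _ hqa
      exact h1.trans (assoc_pow_nat (τ ^ k) hak n).dvd
    have hprime : ∀ n : ℕ, Prime (((τ ^ k) ^ n) q) := fun n => prime_map _ hq
    -- pigeonhole on factors a
    have hex : ∀ n : ℕ, ∃ p ∈ (UniqueFactorizationMonoid.factors a).toFinset,
        Associated (((τ ^ k) ^ n) q) p := by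
      intro n
      obtain ⟨p, hp, hpq⟩ := UniqueFactorizationMonoid.exists_mem_factors_of_dvd ha
        (hprime n).irreducible (hdvd n)
      exact ⟨p, Multiset.mem_toFinset.mpr hp, hpq⟩
    choose f hf hf2 using hex
    obtain ⟨i, j, hij, hfij⟩ := Finite.exists_ne_map_eq_of_infinite
      (fun n : ℕ => (⟨f n, hf n⟩ : (UniqueFactorizationMonoid.factors a).toFinset))
    simp only [Subtype.mk.injEq] at hfij
    have hq' : Associated (((τ ^ k) ^ i) q) (((τ ^ k) ^ j) q) := by
      have h3 := (hf2 j).symm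
      rw [← hfij] at h3
      exact (hf2 i).trans h3
    rcases Ne.lt_or_gt hij with hlt | hlt
    · exact mem_Dset_aux τ q k hk i j hlt hq'
    · exact mem_Dset_aux τ q k hk j i hlt hq'.symm
  · intro h
    -- induction on prime factorization
    have main : ∀ b : A, b ≠ 0 → (∀ q : A, Prime q → q ∣ b → q ∈ Dset τ) → b ∈ Dset τ := by
      intro b
      induction b using UniqueFactorizationMonoid.induction_on_prime with
      | h₁ => intro h0; exact absurd rfl h0
      | h₂ x hx =>
        intro hx0 _
        refine ⟨hx0, 1, one_ne_zero, ?_⟩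
        have : IsUnit ((τ ^ (1 : ℤ)) x) := by
          simpa using hx.map (τ : A →* A)
        exact (associated_one_iff_isUnit.mpr this).trans
          (associated_one_iff_isUnit.mpr hx).symm
      | h₃ b p hb hp ih =>
        intro hpb hall
        have hpD : p ∈ Dset τ := hall p hp (Dvd.intro b rfl)
        have hbD : b ∈ Dset τ := ih hb (fun q hq hqb => hall q hq (hqb.mul_left p))
        obtain ⟨-, k1, hk1, hassoc1⟩ := hpD
        obtain ⟨-, k2, hk2, hassoc2⟩ := hbD
        -- common exponent
        have h1 := assoc_zpow_natAbs τ hassoc1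
        have h2 := assoc_zpow_natAbs τ hassoc2
        set n1 := k1.natAbs with hn1
        set n2 := k2.natAbs with hn2
        have hn1pos : n1 ≠ 0 := Int.natAbs_ne_zero.mpr hk1
        have hn2pos : n2 ≠ 0 := Int.natAbs_ne_zero.mpr hk2
        refine ⟨hpb, (n1 * n2 : ℕ), by exact_mod_cast Nat.mul_ne_zero hn1pos hn2pos, ?_⟩
        have hpow : ∀ (m r : ℕ) (x : A), Associated ((τ ^ (m : ℤ)) x) x →
            Associated ((τ ^ ((m * r : ℕ) : ℤ)) x) x := by
          intro m r x hx
          have := assoc_pow_nat (τ ^ (m : ℤ)) hx r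
          rwa [← zpow_natCast (τ ^ (m : ℤ)) r, ← zpow_mul, ← Nat.cast_mul] at this
        have hp' : Associated ((τ ^ ((n1 * n2 : ℕ) : ℤ)) p) p := hpow n1 n2 p h1
        have hb' : Associated ((τ ^ ((n1 * n2 : ℕ) : ℤ)) b) b := by
          have := hpow n2 n1 b h2
          rwa [Nat.mul_comm n2 n1] at this
        have : (τ ^ ((n1 * n2 : ℕ) : ℤ)) (p * b)
            = (τ ^ ((n1 * n2 : ℕ) : ℤ)) p * (τ ^ ((n1 * n2 : ℕ) : ℤ)) b := map_mul _ _ _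
        rw [this]
        exact hp'.mul_mul hb'
    exact main a ha h
end

section
/- If Y satisfies τ(Y) = M·Y and f is a local content bound at prime p (i.e., v_{τ^k(p)}(Y) ≥ f(k) for all k and all rational solutions Y), then for each j with −J ≤ j ≤ J and each k, v_{τ^k(p)}(Y) ≥ e_j(k+j) + f(k+j), where e_j is the exponent function of cont(M_j). Consequently, f_new(k) := max over j of (e_j(k+j) + f(k+j)) is also a local content bound. -/
-- The valuation of `a ∈ A` at a prime `p` of a UFD `A`: the largest `j` with `p^j ∣ a`,
-- and `⊤` for `a = 0`.
open Classical in
noncomputable def valA {A : Type*} [CommRing A] (p a : A) : WithTop ℤ :=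
  if a = 0 then ⊤ else ((multiplicity p a : ℤ) : WithTop ℤ)

-- The valuation extended to the fraction field `K` of `A` by `v_p(a/b) = v_p(a) - v_p(b)`.
open Classical in
noncomputable def valK {A : Type*} [CommRing A] [IsDomain A] [UniqueFactorizationMonoid A]
    (K : Type*) [Field K] [Algebra A K] [IsFractionRing A K] (p : A) (x : K) : WithTop ℤ :=
  if x = 0 then ⊤
  else (((multiplicity p (IsFractionRing.num A x) : ℤ) -
         (multiplicity p ((IsFractionRing.den A x : A)) : ℤ) : ℤ) : WithTop ℤ)

-- `v_p` of a matrix: the minimum of the valuations of its entries.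
noncomputable def valMat {A : Type*} [CommRing A] [IsDomain A] [UniqueFactorizationMonoid A]
    (K : Type*) [Field K] [Algebra A K] [IsFractionRing A K] (p : A)
    {m n : ℕ} (M : Matrix (Fin m) (Fin n) K) : WithTop ℤ :=
  Finset.univ.inf fun ij : Fin m × Fin n => valK K p (M ij.1 ij.2)

-- `v_p` of a vector: the minimum of the valuations of its entries.
noncomputable def valVec {A : Type*} [CommRing A] [IsDomain A] [UniqueFactorizationMonoid A]
    (K : Type*) [Field K] [Algebra A K] [IsFractionRing A K] (p : A)
    {n : ℕ} (Y : Fin n → K) : WithTop ℤ :=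
  Finset.univ.inf fun i : Fin n => valK K p (Y i)

set_option linter.unusedSectionVars false

section Aux
variable {A : Type*} [CommRing A] [IsDomain A] [UniqueFactorizationMonoid A]
  (K : Type*) [Field K] [Algebra A K] [IsFractionRing A K]
set_option linter.unusedSectionVars false

lemma valK_zero (q : A) : valK K q (0 : K) = ⊤ := by simp [valK]

lemma valK_div_eq (q : A) (hq : Prime q) (a b : A) (ha : a ≠ 0) (hb : b ≠ 0) :
    valK K q (algebraMap A K a / algebraMap A K b)
      = (((multiplicity q a : ℤ) - (multiplicity q b : ℤ) : ℤ) : WithTop ℤ) := by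
  have ha' : algebraMap A K a ≠ 0 := fun h => ha ((IsFractionRing.to_map_eq_zero_iff (K := K)).mp h)
  have hb' : algebraMap A K b ≠ 0 := fun h => hb ((IsFractionRing.to_map_eq_zero_iff (K := K)).mp h)
  set x : K := algebraMap A K a / algebraMap A K b with hxdef
  have hx : x ≠ 0 := div_ne_zero ha' hb'
  have hnx : IsFractionRing.num A x ≠ 0 := by
    simpa [IsFractionRing.num_eq_zero] using hx
  have hdx : (IsFractionRing.den A x : A) ≠ 0 := nonZeroDivisors.coe_ne_zero _
  have hdx' : algebraMap A K (IsFractionRing.den A x : A) ≠ 0 :=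
    fun h => hdx ((IsFractionRing.to_map_eq_zero_iff (K := K)).mp h)
  have hcross : a * (IsFractionRing.den A x : A) = IsFractionRing.num A x * b := by
    apply IsFractionRing.injective A K
    have h1 : algebraMap A K (IsFractionRing.num A x) / algebraMap A K (IsFractionRing.den A x : A) = x :=
      IsFractionRing.mk'_num_den' A x
    have := (div_eq_div_iff hb' hdx').mp (hxdef.symm.trans h1.symm)
    rw [map_mul, map_mul]
    linear_combination this
  have key : multiplicity q a + multiplicity q (IsFractionRing.den A x : A)
      = multiplicity q (IsFractionRing.num A x) + multiplicity q b := by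
    rw [← multiplicity_mul hq (FiniteMultiplicity.of_prime_left hq (mul_ne_zero ha hdx)),
        ← multiplicity_mul hq (FiniteMultiplicity.of_prime_left hq (mul_ne_zero hnx hb)), hcross]
  rw [valK, if_neg hx]
  congr 1
  omega

lemma valK_mul (q : A) (hq : Prime q) (x y : K) :
    valK K q (x * y) = valK K q x + valK K q y := by
  by_cases hx : x = 0
  · simp [hx, valK_zero]
  by_cases hy : y = 0
  · simp [hy, valK_zero]
  have hnx : IsFractionRing.num A x ≠ 0 := by simpa [IsFractionRing.num_eq_zero] using hx
  have hny : IsFractionRing.num A y ≠ 0 := by simpa [IsFractionRing.num_eq_zero] using hy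
  have hdx : (IsFractionRing.den A x : A) ≠ 0 := nonZeroDivisors.coe_ne_zero _
  have hdy : (IsFractionRing.den A y : A) ≠ 0 := nonZeroDivisors.coe_ne_zero _
  have hxy : x * y = algebraMap A K (IsFractionRing.num A x * IsFractionRing.num A y) /
      algebraMap A K ((IsFractionRing.den A x : A) * (IsFractionRing.den A y : A)) := by
    rw [map_mul, map_mul, ← div_mul_div_comm, IsFractionRing.mk'_num_den',
      IsFractionRing.mk'_num_den']
  rw [hxy, valK_div_eq K q hq _ _ (mul_ne_zero hnx hny) (mul_ne_zero hdx hdy),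
    valK, if_neg hx, valK, if_neg hy,
    multiplicity_mul hq (FiniteMultiplicity.of_prime_left hq (mul_ne_zero hnx hny)),
    multiplicity_mul hq (FiniteMultiplicity.of_prime_left hq (mul_ne_zero hdx hdy)),
    ← WithTop.coe_add]
  congr 1
  omega

lemma min_le_valK_add (q : A) (hq : Prime q) (x y : K) :
    min (valK K q x) (valK K q y) ≤ valK K q (x + y) := by
  by_cases hx : x = 0
  · simp [hx, valK_zero]
  by_cases hy : y = 0
  · simp [hy, valK_zero]
  by_cases hxy : x + y = 0
  · rw [hxy, valK_zero]; exact le_top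
  have hnx : IsFractionRing.num A x ≠ 0 := by simpa [IsFractionRing.num_eq_zero] using hx
  have hny : IsFractionRing.num A y ≠ 0 := by simpa [IsFractionRing.num_eq_zero] using hy
  have hdx : (IsFractionRing.den A x : A) ≠ 0 := nonZeroDivisors.coe_ne_zero _
  have hdy : (IsFractionRing.den A y : A) ≠ 0 := nonZeroDivisors.coe_ne_zero _
  have hdx' : algebraMap A K (IsFractionRing.den A x : A) ≠ 0 :=
    fun h => hdx ((IsFractionRing.to_map_eq_zero_iff (K := K)).mp h)
  have hdy' : algebraMap A K (IsFractionRing.den A y : A) ≠ 0 :=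
    fun h => hdy ((IsFractionRing.to_map_eq_zero_iff (K := K)).mp h)
  set a : A := IsFractionRing.num A x * (IsFractionRing.den A y : A) with hadef
  set b : A := (IsFractionRing.den A x : A) * IsFractionRing.num A y with hbdef
  have hxeq : x * algebraMap A K (IsFractionRing.den A x : A)
      = algebraMap A K (IsFractionRing.num A x) :=
    IsFractionRing.num_mul_den_eq_num_iff_eq'.mpr rfl
  have hyeq : y * algebraMap A K (IsFractionRing.den A y : A)
      = algebraMap A K (IsFractionRing.num A y) :=
    IsFractionRing.num_mul_den_eq_num_iff_eq'.mpr rfl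
  have hsum : x + y = algebraMap A K (a + b) /
      algebraMap A K ((IsFractionRing.den A x : A) * (IsFractionRing.den A y : A)) := by
    rw [eq_div_iff (by rw [map_mul]; exact mul_ne_zero hdx' hdy'), map_add, hadef, hbdef,
      map_mul, map_mul, map_mul]
    linear_combination algebraMap A K (IsFractionRing.den A y : A) * hxeq +
      algebraMap A K (IsFractionRing.den A x : A) * hyeq
  have hab : a + b ≠ 0 := by
    intro h
    apply hxy
    rw [hsum, h, map_zero, zero_div]
  have ha : a ≠ 0 := mul_ne_zero hnx hdy
  have hb : b ≠ 0 := mul_ne_zero hdx hny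
  have hmin : min (multiplicity q a) (multiplicity q b) ≤ multiplicity q (a + b) := by
    refine (FiniteMultiplicity.of_prime_left hq hab).le_multiplicity_of_pow_dvd ?_
    exact dvd_add
      ((pow_dvd_pow q (min_le_left _ _)).trans (pow_multiplicity_dvd q a))
      ((pow_dvd_pow q (min_le_right _ _)).trans (pow_multiplicity_dvd q b))
  rw [hsum, valK_div_eq K q hq _ _ hab (mul_ne_zero hdx hdy),
    valK, if_neg hx, valK, if_neg hy,
    multiplicity_mul hq (FiniteMultiplicity.of_prime_left hq (mul_ne_zero hdx hdy))]
  have hma : multiplicity q a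
      = multiplicity q (IsFractionRing.num A x) + multiplicity q (IsFractionRing.den A y : A) :=
    multiplicity_mul hq (FiniteMultiplicity.of_prime_left hq ha)
  have hmb : multiplicity q b
      = multiplicity q (IsFractionRing.den A x : A) + multiplicity q (IsFractionRing.num A y) :=
    multiplicity_mul hq (FiniteMultiplicity.of_prime_left hq hb)
  rw [← WithTop.coe_min, WithTop.coe_le_coe]
  omega
end Aux

section Aux2
variable {A : Type*} [CommRing A] [IsDomain A] [UniqueFactorizationMonoid A]
  (K : Type*) [Field K] [Algebra A K] [IsFractionRing A K]

lemma inf_le_valK_sum (q : A) (hq : Prime q) {ι : Type*} (s : Finset ι) (g : ι → K) :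
    (s.inf fun i => valK K q (g i)) ≤ valK K q (∑ i ∈ s, g i) := by
  classical
  induction s using Finset.cons_induction with
  | empty => simp [valK_zero]
  | cons a s ha ih =>
    rw [Finset.sum_cons, Finset.inf_cons]
    exact le_trans (inf_le_inf_left _ ih) (min_le_valK_add K q hq _ _)

lemma valVec_mulVec (q : A) (hq : Prime q) {n : ℕ} (M : Matrix (Fin n) (Fin n) K)
    (Y : Fin n → K) : valMat K q M + valVec K q Y ≤ valVec K q (M.mulVec Y) := by
  refine Finset.le_inf fun i _ => ?_
  have h1 : (Finset.univ.inf fun j : Fin n => valK K q (M i j * Y j))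
      ≤ valK K q (M.mulVec Y i) := by
    simpa [Matrix.mulVec, dotProduct] using
      inf_le_valK_sum K q hq Finset.univ (fun j => M i j * Y j)
  refine le_trans (Finset.le_inf fun j _ => ?_) h1
  rw [valK_mul K q hq]
  exact add_le_add (Finset.inf_le (Finset.mem_univ (i, j))) (Finset.inf_le (Finset.mem_univ j))

lemma valK_map (τ' : A ≃+* A) (σ' : K ≃+* K)
    (h : ∀ a : A, σ' (algebraMap A K a) = algebraMap A K (τ' a))
    (q : A) (hq : Prime q) (x : K) : valK K (τ' q) (σ' x) = valK K q x := by
  have hτq : Prime (τ' q) := (MulEquiv.prime_iff τ'.toMulEquiv).mpr hq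
  by_cases hx : x = 0
  · simp [hx, valK_zero]
  have hnx : IsFractionRing.num A x ≠ 0 := by simpa [IsFractionRing.num_eq_zero] using hx
  have hdx : (IsFractionRing.den A x : A) ≠ 0 := nonZeroDivisors.coe_ne_zero _
  have hσx : σ' x = algebraMap A K (τ' (IsFractionRing.num A x)) /
      algebraMap A K (τ' (IsFractionRing.den A x : A)) := by
    rw [← h, ← h, ← map_div₀, IsFractionRing.mk'_num_den']
  rw [hσx, valK_div_eq K (τ' q) hτq _ _
      (fun hh => hnx (by simpa using τ'.injective (hh.trans (map_zero τ').symm)))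
      (fun hh => hdx (by simpa using τ'.injective (hh.trans (map_zero τ').symm))),
    multiplicity_map_eq τ', multiplicity_map_eq τ', valK, if_neg hx]

lemma valVec_map (τ' : A ≃+* A) (σ' : K ≃+* K)
    (h : ∀ a : A, σ' (algebraMap A K a) = algebraMap A K (τ' a))
    (q : A) (hq : Prime q) {n : ℕ} (Y : Fin n → K) :
    valVec K (τ' q) (fun i => σ' (Y i)) = valVec K q Y :=
  Finset.inf_congr rfl fun i _ => valK_map K τ' σ' h q hq (Y i)

lemma hσ_zpow (τ : A ≃+* A) (σ : K ≃+* K)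
    (hσ : ∀ a : A, σ (algebraMap A K a) = algebraMap A K (τ a)) :
    ∀ (j : ℤ) (a : A), (σ ^ j) (algebraMap A K a) = algebraMap A K ((τ ^ j) a) := by
  have hinv : ∀ a : A, σ⁻¹ (algebraMap A K a) = algebraMap A K (τ⁻¹ a) := by
    intro a
    have := hσ (τ⁻¹ a)
    have h2 : (τ : A ≃+* A) (τ⁻¹ a) = a := by
      have : (τ * τ⁻¹) a = a := by rw [mul_inv_cancel]; rfl
      exact this
    rw [h2] at this
    rw [← this]
    have : (σ⁻¹ * σ) (algebraMap A K (τ⁻¹ a)) = algebraMap A K (τ⁻¹ a) := by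
      rw [inv_mul_cancel]; rfl
    exact this
  intro j
  induction j using Int.induction_on with
  | zero => intro a; rfl
  | succ i ih =>
    intro a
    have h1 : (σ ^ ((i : ℤ) + 1)) (algebraMap A K a) = (σ ^ (i : ℤ)) (σ (algebraMap A K a)) := by
      rw [zpow_add_one]; rfl
    have h2 : ((τ ^ ((i : ℤ) + 1)) a) = (τ ^ (i : ℤ)) (τ a) := by
      rw [zpow_add_one]; rfl
    rw [h1, h2, hσ, ih]
  | pred i ih =>
    intro a
    have h1 : (σ ^ (-(i : ℤ) - 1)) (algebraMap A K a) = (σ ^ (-(i : ℤ))) (σ⁻¹ (algebraMap A K a)) := by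
      rw [zpow_sub_one]; rfl
    have h2 : ((τ ^ (-(i : ℤ) - 1)) a) = (τ ^ (-(i : ℤ))) (τ⁻¹ a) := by
      rw [zpow_sub_one]; rfl
    rw [h1, h2, hinv, ih]

lemma prime_zpow_apply (τ : A ≃+* A) (p : A) (hp : Prime p) (k : ℤ) :
    Prime ((τ ^ k) p) := (MulEquiv.prime_iff (τ ^ k).toMulEquiv).mpr hp

end Aux2

/-- Let `M_j = N j` be the matrices with `τ^j(Y) = M_j·Y` for solutions of
`τ(Y) = M·Y`, let `c j = cont(M_j)` and `e j k = v_{τ^k(p)}(c j)`. If `f : ℤ → ℤ ∪ {−∞}`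
is a local content bound at the prime `p` (i.e. `v_{τ^k(p)}(Y) ≥ f(k)` for all solutions
`Y` and all `k`), then for each `j` with `−J ≤ j ≤ J` and each `k`,
`v_{τ^k(p)}(Y) ≥ e_j(k+j) + f(k+j)`; consequently
`f_new(k) = max_{−J ≤ j ≤ J} (e_j(k+j) + f(k+j))` is also a local content bound. -/
theorem local_bound_improvement {A : Type*} [CommRing A] [IsDomain A]
    [UniqueFactorizationMonoid A]
    (K : Type*) [Field K] [Algebra A K] [IsFractionRing A K]
    (τ : A ≃+* A) (σ : K ≃+* K)
    (hσ : ∀ a : A, σ (algebraMap A K a) = algebraMap A K (τ a))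
    {n : ℕ} (M : Matrix (Fin n) (Fin n) K) (hM : IsUnit M.det)
    (N : ℤ → Matrix (Fin n) (Fin n) K)
    (hN : ∀ Y : Fin n → K, (fun i => σ (Y i)) = M.mulVec Y →
      ∀ j : ℤ, (fun i => (σ ^ j) (Y i)) = (N j).mulVec Y)
    (p : A) (hp : Prime p)
    (c : ℤ → K) (hc0 : ∀ j, c j ≠ 0)
    (hc : ∀ j : ℤ, ∀ q : A, Prime q → valK K q (c j) = valMat K q (N j))
    (e : ℤ → ℤ → ℤ)
    (he : ∀ j k : ℤ, ((e j k : ℤ) : WithTop ℤ) = valK K ((τ ^ k) p) (c j))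
    (J : ℤ) (hJ : 1 ≤ J)
    (f : ℤ → WithBot ℤ)
    (hf : ∀ Y : Fin n → K, (fun i => σ (Y i)) = M.mulVec Y →
      ∀ k z : ℤ, f k = (z : WithBot ℤ) → (z : WithTop ℤ) ≤ valVec K ((τ ^ k) p) Y) :
    (∀ Y : Fin n → K, (fun i => σ (Y i)) = M.mulVec Y →
      ∀ k j : ℤ, j ∈ Finset.Icc (-J) J → ∀ z : ℤ,
        (e j (k + j) : WithBot ℤ) + f (k + j) = (z : WithBot ℤ) →
        (z : WithTop ℤ) ≤ valVec K ((τ ^ k) p) Y) ∧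
    (∀ Y : Fin n → K, (fun i => σ (Y i)) = M.mulVec Y →
      ∀ k z : ℤ,
        ((Finset.Icc (-J) J).sup fun j => (e j (k + j) : WithBot ℤ) + f (k + j))
          = (z : WithBot ℤ) →
        (z : WithTop ℤ) ≤ valVec K ((τ ^ k) p) Y) := by
  have main : ∀ Y : Fin n → K, (fun i => σ (Y i)) = M.mulVec Y →
      ∀ k j : ℤ, j ∈ Finset.Icc (-J) J → ∀ z : ℤ,
        (e j (k + j) : WithBot ℤ) + f (k + j) = (z : WithBot ℤ) →
        (z : WithTop ℤ) ≤ valVec K ((τ ^ k) p) Y := by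
    intro Y hY k j _ z hz
    have hsol := hN Y hY j
    by_cases hb : f (k + j) = ⊥
    · rw [hb, WithBot.add_bot] at hz
      exact absurd hz.symm (by simp)
    · obtain ⟨w, hw⟩ := WithBot.ne_bot_iff_exists.mp hb
      rw [← hw] at hz
      have hzw : e j (k + j) + w = z := by exact_mod_cast hz
      have hwv : (w : WithTop ℤ) ≤ valVec K ((τ ^ (k + j)) p) Y := hf Y hY (k + j) w hw.symm
      have hq' : Prime ((τ ^ (k + j)) p) := prime_zpow_apply τ p hp (k + j)
      have hqk : Prime ((τ ^ k) p) := prime_zpow_apply τ p hp k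
      have hcomp : (τ ^ (k + j)) p = (τ ^ j) ((τ ^ k) p) := by
        rw [add_comm, zpow_add]; rfl
      have hcompat := hσ_zpow K τ σ hσ j
      calc (z : WithTop ℤ) = ((e j (k + j) : ℤ) : WithTop ℤ) + (w : WithTop ℤ) := by
            rw [← hzw]; push_cast; ring
        _ ≤ valK K ((τ ^ (k + j)) p) (c j) + valVec K ((τ ^ (k + j)) p) Y :=
            add_le_add (le_of_eq (he j (k + j))) hwv
        _ = valMat K ((τ ^ (k + j)) p) (N j) + valVec K ((τ ^ (k + j)) p) Y := by
            rw [hc j _ hq']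
        _ ≤ valVec K ((τ ^ (k + j)) p) ((N j).mulVec Y) := valVec_mulVec K _ hq' _ _
        _ = valVec K ((τ ^ (k + j)) p) (fun i => (σ ^ j) (Y i)) := by rw [hsol]
        _ = valVec K ((τ ^ k) p) Y := by
            rw [hcomp]; exact valVec_map K (τ ^ j) (σ ^ j) hcompat _ hqk Y
  refine ⟨main, ?_⟩
  intro Y hY k z hz
  have hne : (Finset.Icc (-J) J).Nonempty := ⟨0, by simp only [Finset.mem_Icc]; omega⟩
  obtain ⟨j, hj, hsup⟩ := Finset.exists_mem_eq_sup _ hne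
    (fun j => (e j (k + j) : WithBot ℤ) + f (k + j))
  exact main Y hY k j hj z (hsup.symm.trans hz)
end

section
/- The iteration f ↦ f_new, where f_new(k) = max_{−J ≤ j ≤ J} (e_j(k+j) + f(k+j)), started from the function f₀ that is −∞ on a finite interval [ℓ, m] and 0 elsewhere, either reaches a fixed point after finitely many steps, or produces at some step a function f with f(k) > 0 for some k ∉ [ℓ, m]. (Termination of the local algorithm.) -/
/-- A monotone sequence in `WithBot ℤ` bounded above is eventually constant. -/
private lemma monostab (g : ℕ → WithBot ℤ) (mono : Monotone g) (C : ℤ)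
    (bdd : ∀ n, g n ≤ (C : WithBot ℤ)) : ∃ N, ∀ n, N ≤ n → g n = g N := by
  by_contra hc
  push_neg at hc
  by_cases hb : ∀ n, g n = ⊥
  · obtain ⟨n, _, hne⟩ := hc 0
    exact hne (by rw [hb, hb])
  · push_neg at hb
    obtain ⟨n0, hn0⟩ := hb
    obtain ⟨a, ha⟩ := WithBot.ne_bot_iff_exists.mp hn0
    have key : ∀ t : ℕ, ∃ n, ((a + t : ℤ) : WithBot ℤ) ≤ g n := by
      intro t
      induction t with
      | zero => exact ⟨n0, by rw [← ha]; norm_num⟩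
      | succ t ih =>
        obtain ⟨n, hn⟩ := ih
        obtain ⟨n', hn', hne⟩ := hc n
        have hlt : g n < g n' := lt_of_le_of_ne (mono hn') (Ne.symm hne)
        have hgnb : g n ≠ ⊥ := by
          intro h
          rw [h] at hn
          exact absurd hn (by simp)
        obtain ⟨b, hbb⟩ := WithBot.ne_bot_iff_exists.mp hgnb
        have hgn'b : g n' ≠ ⊥ := by
          intro h
          rw [h] at hlt
          exact absurd hlt (by simp)
        obtain ⟨b', hbb'⟩ := WithBot.ne_bot_iff_exists.mp hgn'b
        refine ⟨n', ?_⟩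
        rw [← hbb'] at hlt ⊢
        rw [← hbb] at hn hlt
        have h1 : a + (t : ℤ) ≤ b := by exact_mod_cast hn
        have h2 : b < b' := by exact_mod_cast hlt
        have : a + ((t : ℤ) + 1) ≤ b' := by omega
        exact_mod_cast this
    have haC : a ≤ C := by
      have := bdd n0
      rw [← ha] at this
      exact_mod_cast this
    obtain ⟨n, hn⟩ := key (C + 1 - a).toNat
    have hval : a + ((C + 1 - a).toNat : ℤ) = C + 1 := by omega
    rw [hval] at hn
    have := le_trans hn (bdd n)
    have : (C + 1 : ℤ) ≤ C := by exact_mod_cast this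
    omega

/-- Termination of the local algorithm: The iteration `f ↦ f_new`, where
`f_new(k) = max_{−J ≤ j ≤ J} (e_j(k+j) + f(k+j))` (the `e_j : ℤ → ℤ` having finite support
and `e₀ ≡ 0`), started from the function `f₀` that is `−∞` on the finite interval `[ℓ, m]`
and `0` elsewhere, either reaches a fixed point after finitely many steps, or produces at
some step a function `f` with `f(k) > 0` for some `k ∉ [ℓ, m]`. -/
theorem local_algorithm_terminates (J l m : ℤ) (hJ : 1 ≤ J)
    (e : ℤ → ℤ → ℤ)
    (he0 : ∀ k : ℤ, e 0 k = 0)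
    (hefin : ∀ j : ℤ, {k : ℤ | e j k ≠ 0}.Finite)
    (F : ℕ → ℤ → WithBot ℤ)
    (hF0 : ∀ k : ℤ, F 0 k = if k ∈ Set.Icc l m then ⊥ else 0)
    (hFs : ∀ (N : ℕ) (k : ℤ),
      F (N + 1) k = (Finset.Icc (-J) J).sup fun j => (e j (k + j) : WithBot ℤ) + F N (k + j)) :
    (∃ N : ℕ, F (N + 1) = F N) ∨
      (∃ (N : ℕ) (k : ℤ), k ∉ Set.Icc l m ∧ (0 : WithBot ℤ) < F N k) := by
  by_contra hcon
  push_neg at hcon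
  obtain ⟨h1, h2⟩ := hcon
  -- monotonicity via j = 0
  have hmono1 : ∀ N k, F N k ≤ F (N + 1) k := by
    intro N k
    rw [hFs]
    have h0 : (0 : ℤ) ∈ Finset.Icc (-J) J := by
      simp only [Finset.mem_Icc]; omega
    have := Finset.le_sup (f := fun j => ((e j (k + j) : ℤ) : WithBot ℤ) + F N (k + j)) h0
    simpa [he0] using this
  have hmono : ∀ k, Monotone fun N => F N k := fun k =>
    monotone_nat_of_le_succ fun N => hmono1 N k
  -- outside the interval, values are identically 0
  have houtz : ∀ N k, k ∉ Set.Icc l m → F N k = 0 := by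
    intro N k hk
    refine le_antisymm (h2 N k hk) ?_
    have : F 0 k ≤ F N k := hmono k (Nat.zero_le N)
    rw [hF0 k, if_neg hk] at this
    exact this
  -- step with j = -1
  have hstep : ∀ N k, ((e (-1) k : ℤ) : WithBot ℤ) + F N k ≤ F (N + 1) (k + 1) := by
    intro N k
    rw [hFs]
    have hm : (-1 : ℤ) ∈ Finset.Icc (-J) J := by
      simp only [Finset.mem_Icc]; omega
    have := Finset.le_sup
      (f := fun j => ((e j ((k + 1) + j) : ℤ) : WithBot ℤ) + F N ((k + 1) + j)) hm
    have hk1 : (k + 1) + (-1) = k := by ring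
    simpa only [hk1] using this
  -- chained step
  have hchain : ∀ (N : ℕ) (k : ℤ) (r : ℕ),
      ((∑ i ∈ Finset.range r, e (-1) (k + i) : ℤ) : WithBot ℤ) + F N k
        ≤ F (N + r) (k + r) := by
    intro N k r
    induction r with
    | zero => simp
    | succ r ih =>
      have hs := hstep (N + r) (k + r)
      have hadd : ((e (-1) (k + r) : ℤ) : WithBot ℤ)
          + (((∑ i ∈ Finset.range r, e (-1) (k + i) : ℤ) : WithBot ℤ) + F N k)
          ≤ ((e (-1) (k + r) : ℤ) : WithBot ℤ) + F (N + r) (k + r) :=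
        add_le_add_right ih _
      have heq : ((∑ i ∈ Finset.range (r + 1), e (-1) (k + i) : ℤ) : WithBot ℤ) + F N k
          = ((e (-1) (k + r) : ℤ) : WithBot ℤ)
            + (((∑ i ∈ Finset.range r, e (-1) (k + i) : ℤ) : WithBot ℤ) + F N k) := by
        rw [Finset.sum_range_succ]
        push_cast
        abel
      have hcast1 : (N : ℕ) + (r + 1 : ℕ) = (N + r) + 1 := by omega
      have hcast2 : k + ((r : ℕ) + 1 : ℕ) = (k + r) + 1 := by push_cast; ring
      rw [heq, hcast1, hcast2]
      exact le_trans hadd hs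
  -- upper bound on the interval
  have hbound : ∀ (N : ℕ) (k : ℤ), k ∈ Set.Icc l m →
      F N k ≤ ((-(∑ i ∈ Finset.range (m + 1 - k).toNat, e (-1) (k + i)) : ℤ) : WithBot ℤ) := by
    intro N k hk
    obtain ⟨hlk, hkm⟩ := hk
    set r := (m + 1 - k).toNat with hr
    set S : ℤ := ∑ i ∈ Finset.range r, e (-1) (k + i) with hS
    have hkr : k + (r : ℤ) = m + 1 := by omega
    have hch := hchain N k r
    rw [hkr] at hch
    rw [houtz (N + r) (m + 1) (by simp [Set.mem_Icc])] at hch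
    -- hch : ↑S + F N k ≤ 0
    have hz : (0 : WithBot ℤ) = (S : WithBot ℤ) + ((-S : ℤ) : WithBot ℤ) := by
      norm_cast; ring
    rw [hz] at hch
    exact (WithBot.add_le_add_iff_left (by exact WithBot.coe_ne_bot)).mp hch
  -- each coordinate in the interval stabilizes
  have hstab : ∀ k ∈ Finset.Icc l m, ∃ N : ℕ, ∀ n, N ≤ n → F n k = F N k := by
    intro k hk
    exact monostab (fun N => F N k) (hmono k) _
      (fun n => hbound n k (by simpa using hk))
  choose Nf hNf using hstab
  set Nmax : ℕ := (Finset.Icc l m).attach.sup (fun k => Nf k.1 k.2) with hNmax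
  refine h1 Nmax ?_
  funext k
  by_cases hk : k ∈ Set.Icc l m
  · have hk' : k ∈ Finset.Icc l m := by simpa using hk
    have hle : Nf k hk' ≤ Nmax :=
      Finset.le_sup (f := fun k => Nf k.1 k.2) (Finset.mem_attach _ ⟨k, hk'⟩)
    rw [hNf k hk' (Nmax + 1) (by omega), hNf k hk' Nmax hle]
  · rw [houtz _ _ hk, houtz _ _ hk]
end
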